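/- arXiv:1406.0819 — 4 statements merged into one kernel-verified Lean document; each statement's English description precedes it below -/
import Mathlib

section
/- The Hegselmann-Krause update map preserves the ordering of opinions: if x(1) ≤ x(2) ≤ ... ≤ x(n) and y is the HK update of x, then y(1) ≤ y(2) ≤ ... ≤ y(n). -/
/-!
Let `x i ≤ x k`. An opinion within 1 of `x k` but not of `x i` lies above all of `N(i)`, and one
within 1 of `x i` but not of `x k` lies below all of `N(k)`. So the average over `N(i) ∪ N(k)`
is at least the average over `N(i)` and at most the average over `N(k)`.
-/

/-- The Hegselmann-Krause update with confidence bound 1. -/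
noncomputable def hkUpdate {n : ℕ} (x : Fin n → ℝ) : Fin n → ℝ := fun i =>
  (∑ j ∈ Finset.univ.filter (fun j => |x j - x i| ≤ 1), x j) /
    ((Finset.univ.filter (fun j => |x j - x i| ≤ 1)).card : ℝ)

open Finset

section Average

variable {ι K : Type*} [Field K] [LinearOrder K] [IsStrictOrderedRing K]

theorem sum_mul_card_le_card_mul_sum {S D : Finset ι} {f : ι → K}
    (h : ∀ s ∈ S, ∀ d ∈ D, f s ≤ f d) :
    (∑ s ∈ S, f s) * #D ≤ #S * ∑ d ∈ D, f d :=
  calc (∑ s ∈ S, f s) * #D = ∑ s ∈ S, ∑ _d ∈ D, f s := by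
        simp only [sum_const, nsmul_eq_mul, sum_mul, mul_comm]
    _ ≤ ∑ _s ∈ S, ∑ d ∈ D, f d :=
      sum_le_sum fun s hs => sum_le_sum fun d hd => h s hs d hd
    _ = #S * ∑ d ∈ D, f d := by rw [sum_const, nsmul_eq_mul]

theorem sum_div_card_le_sum_union_div_card [DecidableEq ι] {S D : Finset ι} {f : ι → K}
    (hS : S.Nonempty) (hSD : Disjoint S D) (h : ∀ s ∈ S, ∀ d ∈ D, f s ≤ f d) :
    (∑ i ∈ S, f i) / #S ≤ (∑ i ∈ S ∪ D, f i) / #(S ∪ D) := by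
  have hS0 : (0 : K) < #S := by exact_mod_cast hS.card_pos
  have hSD0 : (0 : K) < #(S ∪ D) := by exact_mod_cast (hS.mono subset_union_left).card_pos
  rw [div_le_div_iff₀ hS0 hSD0, sum_union hSD, card_union_of_disjoint hSD]
  push_cast
  linarith [sum_mul_card_le_card_mul_sum h]

theorem sum_union_div_card_le_sum_div_card [DecidableEq ι] {S D : Finset ι} {f : ι → K}
    (hS : S.Nonempty) (hSD : Disjoint S D) (h : ∀ s ∈ S, ∀ d ∈ D, f d ≤ f s) :
    (∑ i ∈ S ∪ D, f i) / #(S ∪ D) ≤ (∑ i ∈ S, f i) / #S := by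
  have := sum_div_card_le_sum_union_div_card (f := fun i => -f i) hS hSD
    fun s hs d hd => neg_le_neg (h s hs d hd)
  simp only [sum_neg_distrib, neg_div] at this
  exact neg_le_neg_iff.mp this

end Average

section Confidence

variable {a b u v ε : ℝ}

theorem le_of_abs_sub_le_of_lt_abs_sub (hab : a ≤ b) (hu : |u - a| ≤ ε) (hv : |v - b| ≤ ε)
    (hva : ε < |v - a|) : u ≤ v := by
  rw [abs_le] at hu hv
  rcases lt_abs.mp hva with h | h <;> linarith

theorem le_of_abs_sub_le_of_lt_abs_sub' (hab : a ≤ b) (hu : |u - b| ≤ ε) (hv : |v - a| ≤ ε)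
    (hvb : ε < |v - b|) : v ≤ u := by
  rw [abs_le] at hu hv
  rcases lt_abs.mp hvb with h | h <;> linarith

end Confidence

theorem hkUpdate_le_hkUpdate {n : ℕ} (x : Fin n → ℝ) {i k : Fin n} (hik : x i ≤ x k) :
    hkUpdate x i ≤ hkUpdate x k := by
  set Ni := univ.filter fun j => |x j - x i| ≤ 1
  set Nk := univ.filter fun j => |x j - x k| ≤ 1
  have hNi : Ni.Nonempty := ⟨i, by simp [Ni]⟩
  have hNk : Nk.Nonempty := ⟨k, by simp [Nk]⟩
  calc hkUpdate x i = (∑ j ∈ Ni, x j) / #Ni := rfl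
    _ ≤ (∑ j ∈ Ni ∪ Nk \ Ni, x j) / #(Ni ∪ Nk \ Ni) := by
      refine sum_div_card_le_sum_union_div_card hNi disjoint_sdiff fun s hs d hd => ?_
      simp only [Ni, Nk, mem_sdiff, mem_filter, mem_univ, true_and, not_le] at hs hd
      exact le_of_abs_sub_le_of_lt_abs_sub hik hs hd.1 hd.2
    _ = (∑ j ∈ Nk ∪ Ni \ Nk, x j) / #(Nk ∪ Ni \ Nk) := by
      rw [union_sdiff_self_eq_union, union_sdiff_self_eq_union, union_comm]
    _ ≤ (∑ j ∈ Nk, x j) / #Nk := by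
      refine sum_union_div_card_le_sum_div_card hNk disjoint_sdiff fun s hs d hd => ?_
      simp only [Ni, Nk, mem_sdiff, mem_filter, mem_univ, true_and, not_le] at hs hd
      exact le_of_abs_sub_le_of_lt_abs_sub' hik hs hd.1 hd.2
    _ = hkUpdate x k := rfl

/-- The HK update map preserves the ordering of opinions. -/
theorem hk_update_monotone {n : ℕ} (x : Fin n → ℝ) (hx : Monotone x) :
    Monotone (hkUpdate x) :=
  fun _ _ hik => hkUpdate_le_hkUpdate x (hx hik)
end

section
/- If a sorted opinion vector x ∈ ℝ^n is symmetric about its midpoint, i.e., x(i) + x(n+1-i) = c for all i and some constant c, then its HK update y is also symmetric about the same midpoint: y(i) + y(n+1-i) = c for all i. -/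
/-! Reflecting the indices maps the confidence neighbourhood of `i` onto that of `i.rev`, and
turns every opinion `x j` into `c - x j`; so the average over the neighbourhood of `i.rev` is
`c` minus the average over the neighbourhood of `i`. -/

open scoped Classical

open Finset BigOperators

namespace HK

variable {n : ℕ} (x : Fin n → ℝ)

noncomputable def neighbors (i : Fin n) : Finset (Fin n) := univ.filter fun j => |x j - x i| ≤ 1

lemma self_mem_neighbors (i : Fin n) : i ∈ neighbors x i := by
  simp [neighbors]

lemma hkUpdate_eq_expect (i : Fin n) : hkUpdate x i = 𝔼 j ∈ neighbors x i, x j :=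
  (expect_eq_sum_div_card _ _).symm

variable {x} {c : ℝ}

lemma mem_neighbors_rev_iff (hsym : ∀ i, x i + x i.rev = c) (i j : Fin n) :
    j ∈ neighbors x i.rev ↔ j.rev ∈ neighbors x i := by
  have hdist : x j - x i.rev = -(x j.rev - x i) := by linarith [hsym i, hsym j]
  simp only [neighbors, mem_filter, mem_univ, true_and, hdist, abs_neg]

lemma hkUpdate_rev (hsym : ∀ i, x i + x i.rev = c) (i : Fin n) :
    hkUpdate x i.rev = c - hkUpdate x i := by
  have hreflect : 𝔼 j ∈ neighbors x i, (c - x j) = 𝔼 j ∈ neighbors x i.rev, x j :=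
    expect_equiv Fin.revPerm
      (fun j => by rw [Fin.revPerm_apply, mem_neighbors_rev_iff hsym, Fin.rev_rev])
      (fun j _ => by rw [Fin.revPerm_apply]; linarith [hsym j])
  rw [hkUpdate_eq_expect, hkUpdate_eq_expect, ← hreflect, expect_sub_distrib,
    expect_const ⟨i, self_mem_neighbors x i⟩]

end HK

theorem hk_update_symmetric_general {n : ℕ} (x : Fin n → ℝ) (c : ℝ)
    (hsym : ∀ i : Fin n, x i + x i.rev = c) :
    ∀ i : Fin n, hkUpdate x i + hkUpdate x i.rev = c := by
  intro i
  rw [HK.hkUpdate_rev hsym i]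
  ring

/-- The HK update preserves symmetry about the midpoint: if x(i) + x(n+1-i) = c
for all i, the same holds for the update. -/
theorem hk_update_symmetric {n : ℕ} (x : Fin n → ℝ) (hx : Monotone x) (c : ℝ)
    (hsym : ∀ i : Fin n, x i + x i.rev = c) :
    ∀ i : Fin n, hkUpdate x i + hkUpdate x i.rev = c :=
  hk_update_symmetric_general x c hsym
end

section
/- Starting from the equally spaced configuration (1, 2, ..., n), the time needed for the HK dynamics to freeze is at least n/2. -/
/-!
Edge effects travel inward by one agent per step. By induction, while `2t + 1 ≤ n` the agents
`t, …, n - 1 - t` (indexed from `0`) are still at their initial positions, since each of them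
sees exactly its two index-neighbours, at distance `1`. Agent `t - 1` lies strictly between `t`
and `t + 1`, the agents further left lie below `t`, and the right end mirrors the left one.
Hence agents `t - 1` and `t` (or `0` and `1` when `t = 0`) are within distance `1` but apart,
which a fixed point of the dynamics forbids.
-/

open scoped Classical

open Finset Function

variable {n : ℕ}

noncomputable def hkNeighbors (x : Fin n → ℝ) (i : Fin n) : Finset (Fin n) :=
  univ.filter fun j => |x j - x i| ≤ 1

section Update

variable {x : Fin n → ℝ} {i j : Fin n}

lemma mem_hkNeighbors : j ∈ hkNeighbors x i ↔ |x j - x i| ≤ 1 := by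
  simp [hkNeighbors]

lemma mem_hkNeighbors_comm : j ∈ hkNeighbors x i ↔ i ∈ hkNeighbors x j := by
  rw [mem_hkNeighbors, mem_hkNeighbors, abs_sub_comm]

lemma self_mem_hkNeighbors : i ∈ hkNeighbors x i := by
  simp [mem_hkNeighbors]

lemma hkUpdate_eq_sum_div_card (x : Fin n → ℝ) (i : Fin n) :
    hkUpdate x i = (∑ j ∈ hkNeighbors x i, x j) / #(hkNeighbors x i) := rfl

lemma card_hkNeighbors_pos : (0 : ℝ) < #(hkNeighbors x i) := by
  exact_mod_cast card_pos.mpr ⟨i, self_mem_hkNeighbors⟩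

lemma hkUpdate_lt_of_forall_le {c : ℝ} (h : ∀ k ∈ hkNeighbors x i, x k ≤ c) (hi : x i < c) :
    hkUpdate x i < c := by
  rw [hkUpdate_eq_sum_div_card, div_lt_iff₀ card_hkNeighbors_pos, mul_comm, ← nsmul_eq_mul, ← sum_const]
  exact sum_lt_sum h ⟨i, self_mem_hkNeighbors, hi⟩

lemma lt_hkUpdate_of_forall_le {c : ℝ} (h : ∀ k ∈ hkNeighbors x i, c ≤ x k)
    (hj : j ∈ hkNeighbors x i) (hcj : c < x j) : c < hkUpdate x i := by
  rw [hkUpdate_eq_sum_div_card, lt_div_iff₀ card_hkNeighbors_pos, mul_comm, ← nsmul_eq_mul,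
    ← sum_const]
  exact sum_lt_sum h ⟨j, hj, hcj⟩

lemma hkUpdate_lt_add_one (x : Fin n → ℝ) (i : Fin n) : hkUpdate x i < x i + 1 :=
  hkUpdate_lt_of_forall_le (fun _ hk ↦ by linarith [(abs_le.1 (mem_hkNeighbors.1 hk)).2])
    (lt_add_one _)

lemma hkUpdate_of_hkNeighbors_eq_pair {a b : Fin n} (h : hkNeighbors x i = {a, b})
    (hab : a ≠ b) : hkUpdate x i = (x a + x b) / 2 := by
  rw [hkUpdate_eq_sum_div_card, h, sum_pair hab, card_pair hab]
  norm_num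

lemma hkUpdate_of_hkNeighbors_eq_triple {a b c : Fin n} (h : hkNeighbors x i = {a, b, c})
    (hab : a ≠ b) (hac : a ≠ c) (hbc : b ≠ c) : hkUpdate x i = (x a + x b + x c) / 3 := by
  rw [hkUpdate_eq_sum_div_card, h, sum_insert (by simp [hab, hac]), sum_pair hbc,
    card_insert_of_notMem (by simp [hab, hac]), card_pair hbc]
  norm_num
  ring

/-- At a fixed point, the lowest agent with a strictly higher neighbour would move up. -/
theorem eq_of_isFixedPt_hkUpdate (hx : IsFixedPt hkUpdate x) (h : |x i - x j| ≤ 1) :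
    x i = x j := by
  by_contra hne
  set A := univ.filter fun a ↦ ∃ b ∈ hkNeighbors x a, x a < x b
  have hA : A.Nonempty := by
    rcases lt_or_gt_of_ne hne with hlt | hlt
    · exact ⟨i, mem_filter.2 ⟨mem_univ _, j, mem_hkNeighbors_comm.1 (mem_hkNeighbors.2 h), hlt⟩⟩
    · exact ⟨j, mem_filter.2 ⟨mem_univ _, i, mem_hkNeighbors.2 h, hlt⟩⟩
  obtain ⟨a, ha, hmin⟩ := exists_min_image A x hA
  obtain ⟨b, hb, hab⟩ := (mem_filter.1 ha).2
  have hle : ∀ k ∈ hkNeighbors x a, x a ≤ x k := fun k hk ↦ by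
    by_contra! hka
    exact (hmin k (mem_filter.2 ⟨mem_univ _, a, mem_hkNeighbors_comm.1 hk, hka⟩)).not_gt hka
  exact (lt_hkUpdate_of_forall_le hle hb hab).ne' (congrFun hx a)

lemma hkUpdate_comp_perm (x : Fin n → ℝ) (σ : Equiv.Perm (Fin n)) :
    hkUpdate (x ∘ σ) = hkUpdate x ∘ σ := by
  ext i
  simp only [hkUpdate, comp_apply, sum_filter, card_filter]
  rw [Equiv.sum_comp σ fun j ↦ if |x j - x (σ i)| ≤ 1 then x j else 0,
    Equiv.sum_comp σ fun j ↦ if |x j - x (σ i)| ≤ 1 then 1 else 0]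

lemma hkUpdate_const_sub (x : Fin n → ℝ) (c : ℝ) :
    hkUpdate (fun i ↦ c - x i) = fun i ↦ c - hkUpdate x i := by
  ext i
  have hN : hkNeighbors (fun i ↦ c - x i) i = hkNeighbors x i := by
    ext j
    rw [mem_hkNeighbors, mem_hkNeighbors, sub_sub_sub_cancel_left, abs_sub_comm]
  have hcard := (card_hkNeighbors_pos (x := x) (i := i)).ne'
  rw [hkUpdate_eq_sum_div_card, hN, hkUpdate_eq_sum_div_card, sum_sub_distrib, sum_const,
    nsmul_eq_mul]
  field_simp

lemma hkUpdate_rev {c : ℝ} (hx : ∀ i, x i.rev = c - x i) (i : Fin n) :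
    hkUpdate x i.rev = c - hkUpdate x i := by
  have h := congrFun (hkUpdate_comp_perm x Fin.revPerm) i
  rw [show x ∘ Fin.revPerm = fun i ↦ c - x i from funext hx, hkUpdate_const_sub] at h
  simpa using h.symm

end Update

lemma abs_natCast_sub_natCast_le_one {a b : ℕ} :
    |(a : ℝ) - b| ≤ 1 ↔ a ≤ b + 1 ∧ b ≤ a + 1 := by
  rw [abs_sub_le_iff, sub_le_iff_le_add, sub_le_iff_le_add, add_comm 1, add_comm 1]
  norm_cast

structure IsProfileAt (t : ℕ) (y : Fin n → ℝ) : Prop where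
  rev : ∀ i : Fin n, y i.rev = n + 1 - y i
  middle : ∀ i : Fin n, t ≤ i → (i : ℕ) + t < n → y i = i + 1
  front : ∀ i : Fin n, (i : ℕ) + 1 = t → t < y i ∧ y i < t + 1
  behind : ∀ i : Fin n, (i : ℕ) + 1 < t → y i < t

namespace IsProfileAt

variable {t : ℕ} {y : Fin n → ℝ}

lemma initial {x : Fin n → ℝ} (hx : ∀ i : Fin n, x i = (i : ℕ) + 1) : IsProfileAt 0 x where
  rev i := by
    rw [hx, hx, Fin.val_rev, Nat.cast_sub (by omega)]
    push_cast
    ring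
  middle i _ _ := hx i
  front _ h := by omega
  behind _ h := by omega

lemma lt_add_one_of_lt (hy : IsProfileAt t y) {k : Fin n} (hk : (k : ℕ) < t) : y k < t + 1 := by
  rcases (by omega : (k : ℕ) + 1 < t ∨ (k : ℕ) + 1 = t) with hk | hk
  · linarith [hy.behind k hk]
  · exact (hy.front k hk).2

lemma sub_lt_of_le (hy : IsProfileAt t y) {k : Fin n} (hk : n ≤ k + t) : (n : ℝ) - t < y k := by
  have hrev := hy.rev k.rev
  rw [Fin.rev_rev] at hrev
  linarith [hy.lt_add_one_of_lt (k := k.rev) (by rw [Fin.val_rev]; omega)]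

lemma mem_hkNeighbors_iff (hy : IsProfileAt t y) {i k : Fin n} (hti : t ≤ i)
    (hin : (i : ℕ) + t + 1 < n) : k ∈ hkNeighbors y i ↔ (i : ℕ) ≤ k + 1 ∧ (k : ℕ) ≤ i + 1 := by
  have hti' : (t : ℝ) ≤ i := by exact_mod_cast hti
  rw [mem_hkNeighbors, hy.middle i hti (by omega), abs_le]
  rcases (by omega : (k : ℕ) + 1 < t ∨ (k : ℕ) + 1 = t ∨ (t ≤ k ∧ (k : ℕ) + t < n) ∨ n ≤ k + t)
    with hk | hk | ⟨hk, hk'⟩ | hk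
  · have := hy.behind k hk
    exact iff_of_false (fun h ↦ by linarith [h.1]) (by omega)
  · obtain ⟨hlo, hhi⟩ := hy.front k hk
    rcases eq_or_lt_of_le hti with rfl | hlt
    · exact iff_of_true ⟨by linarith, by linarith⟩ (by omega)
    · have : (t : ℝ) + 1 ≤ i := by exact_mod_cast hlt
      exact iff_of_false (fun h ↦ by linarith [h.1]) (by omega)
  · rw [hy.middle k hk hk', add_sub_add_right_eq_sub, ← abs_le, abs_natCast_sub_natCast_le_one]
    omega
  · have := hy.sub_lt_of_le hk
    have : (i : ℝ) + t + 2 ≤ n := by exact_mod_cast hin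
    exact iff_of_false (fun h ↦ by linarith [h.2]) (by omega)

lemma hkNeighbors_eq_triple (hy : IsProfileAt t y) {i : Fin n} (hti : t ≤ i)
    (hin : (i : ℕ) + t + 1 < n) (hi : 0 < (i : ℕ)) :
    hkNeighbors y i = {⟨i - 1, by omega⟩, i, ⟨i + 1, by omega⟩} := by
  ext k
  rw [hy.mem_hkNeighbors_iff hti hin]
  simp only [mem_insert, mem_singleton, Fin.ext_iff]
  omega

lemma hkUpdate_eq_triple (hy : IsProfileAt t y) {i : Fin n} (hti : t ≤ i)
    (hin : (i : ℕ) + t + 1 < n) (hi : 0 < (i : ℕ)) :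
    hkUpdate y i = (y ⟨i - 1, by omega⟩ + (i + 1) + (i + 2)) / 3 := by
  rw [hkUpdate_of_hkNeighbors_eq_triple (hy.hkNeighbors_eq_triple hti hin hi)
      (by simp [Fin.ext_iff]; omega) (by simp [Fin.ext_iff]) (by simp [Fin.ext_iff]),
    hy.middle i hti (by omega), hy.middle ⟨i + 1, by omega⟩ (by simp; omega) (by simp; omega)]
  push_cast
  ring

lemma hkUpdate_middle (hy : IsProfileAt t y) {i : Fin n} (hti : t < i)
    (hin : (i : ℕ) + t + 1 < n) : hkUpdate y i = i + 1 := by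
  rw [hy.hkUpdate_eq_triple hti.le hin (by omega),
    hy.middle ⟨i - 1, by omega⟩ (by simp; omega) (by simp; omega)]
  simp only [Nat.cast_sub (by omega : 1 ≤ (i : ℕ))]
  push_cast
  ring

lemma hkUpdate_front (hy : IsProfileAt t y) (hn : 2 * t + 3 ≤ n) {i : Fin n} (hi : (i : ℕ) = t) :
    t + 1 < hkUpdate y i ∧ hkUpdate y i < t + 2 := by
  have hyi : y i = t + 1 := by rw [hy.middle i hi.ge (by omega), hi]
  refine ⟨?_, by linarith [hkUpdate_lt_add_one y i]⟩
  rcases t.eq_zero_or_pos with rfl | ht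
  · have hpair : hkNeighbors y i = {i, ⟨1, by omega⟩} := by
      ext k
      rw [hy.mem_hkNeighbors_iff hi.ge (by omega)]
      simp only [mem_insert, mem_singleton, Fin.ext_iff]
      omega
    rw [hkUpdate_of_hkNeighbors_eq_pair hpair (by simp [Fin.ext_iff, hi]), hyi,
      hy.middle ⟨1, by omega⟩ (by simp) (by simp; omega)]
    norm_num
  · have hit : ((i : ℕ) : ℝ) = t := by exact_mod_cast hi
    rw [hy.hkUpdate_eq_triple hi.ge (by omega) (by omega)]
    linarith [(hy.front ⟨i - 1, by omega⟩ (by simp; omega)).1]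

lemma hkUpdate_behind (hy : IsProfileAt t y) (hn : 2 * t + 3 ≤ n) {i : Fin n}
    (hi : (i : ℕ) < t) : hkUpdate y i < t + 1 := by
  rcases (by omega : (i : ℕ) + 1 < t ∨ (i : ℕ) + 1 = t) with hi | hi
  · linarith [hkUpdate_lt_add_one y i, hy.behind i hi]
  · have hyi := (hy.front i hi).2
    refine hkUpdate_lt_of_forall_le (fun k hk ↦ ?_) hyi
    have hyk := (abs_le.1 (mem_hkNeighbors.1 hk)).2
    rcases (by omega : (k : ℕ) < t ∨ (t ≤ k ∧ (k : ℕ) + t < n) ∨ n ≤ k + t)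
      with hk | ⟨hk, hk'⟩ | hk
    · exact (hy.lt_add_one_of_lt hk).le
    · rw [hy.middle k hk hk'] at hyk ⊢
      have : (k : ℕ) < t + 1 := by exact_mod_cast (by linarith : (k : ℝ) < t + 1)
      exact_mod_cast (by omega : (k : ℕ) + 1 ≤ t + 1)
    · have : (2 * t + 3 : ℝ) ≤ n := by exact_mod_cast hn
      linarith [hy.sub_lt_of_le hk]

lemma hkUpdate_isProfileAt (hy : IsProfileAt t y) (hn : 2 * t + 3 ≤ n) :
    IsProfileAt (t + 1) (hkUpdate y) where
  rev := hkUpdate_rev hy.rev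
  middle _ h h' := hy.hkUpdate_middle h (by omega)
  front i hi := by
    obtain ⟨hlo, hhi⟩ := hy.hkUpdate_front hn (i := i) (by omega)
    push_cast
    exact ⟨hlo, by linarith⟩
  behind i hi := by
    push_cast
    exact hy.hkUpdate_behind hn (i := i) (by omega)

lemma not_isFixedPt (hy : IsProfileAt t y) (hn : 2 ≤ n) (ht : 2 * t + 1 ≤ n) :
    ¬IsFixedPt hkUpdate y := by
  intro hfix
  rcases t.eq_zero_or_pos with rfl | ht
  · have h0 := hy.middle ⟨0, by omega⟩ le_rfl (by simp; omega)
    have h1 := hy.middle ⟨1, by omega⟩ (by simp) (by simp; omega)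
    have := eq_of_isFixedPt_hkUpdate hfix (i := ⟨0, by omega⟩) (j := ⟨1, by omega⟩)
      (by rw [h0, h1]; norm_num)
    rw [h0, h1] at this
    norm_num at this
  · obtain ⟨hlo, hhi⟩ := hy.front ⟨t - 1, by omega⟩ (by simp; omega)
    have hmid := hy.middle ⟨t, by omega⟩ le_rfl (by simp; omega)
    have := eq_of_isFixedPt_hkUpdate hfix (i := ⟨t - 1, by omega⟩) (j := ⟨t, by omega⟩)
      (by rw [hmid, abs_le]; constructor <;> simp <;> linarith)
    simp only [hmid] at this
    linarith

end IsProfileAt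

lemma isProfileAt_iterate {x₀ : Fin n → ℝ} (hx₀ : ∀ i : Fin n, x₀ i = (i : ℕ) + 1) :
    ∀ t : ℕ, 2 * t + 1 ≤ n → IsProfileAt t (hkUpdate^[t] x₀)
  | 0, _ => IsProfileAt.initial hx₀
  | t + 1, h => by
    rw [iterate_succ_apply']
    exact (isProfileAt_iterate hx₀ t (by omega)).hkUpdate_isProfileAt (by omega)

/-- Starting from (1,2,...,n) with n ≥ 2, the HK dynamics take time at least n/2
to freeze: any time t at which the configuration is a fixed point satisfies
t ≥ n/2. -/
theorem hk_equally_spaced_freezing_time_lower (n : ℕ) (hn : 2 ≤ n)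
    (x0 : Fin n → ℝ) (hx0 : ∀ i : Fin n, x0 i = (i : ℕ) + 1) :
    ∀ t : ℕ, hkUpdate^[t + 1] x0 = hkUpdate^[t] x0 → (n : ℝ) / 2 ≤ t := by
  intro t hfix
  by_contra! hlt
  have ht : 2 * t + 1 ≤ n := by
    have : ((2 * t : ℕ) : ℝ) < n := by push_cast; linarith
    exact_mod_cast this
  refine (isProfileAt_iterate hx0 t ht).not_isFixedPt hn ht ?_
  rwa [IsFixedPt, ← iterate_succ_apply' hkUpdate t x0]
end

section
/- Let T be the infinite HK block-shift operator with a = 311/324, b = 161/162 the first two row sums, all other row sums ≤ 1, and let γ = 0.1117. Define y_0 = 𝟙 and y_{τ+1} = T y_τ. Then for all τ ≥ 1: 1−a ≤ 1−y_τ(1) < (1+γ)(1−a), 1−b ≤ 1−y_τ(2) < γ(1−a)+(1+γ)(1−b), and 1−y_τ(i) < γ^{i−2}(1−a) for all i ≥ 3. Consequently ‖T^n 𝟙 − 𝟙‖_∞ < (1+γ)(1−a) < 7/79 for all n. -/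
/-- Row 1 (index 0) of the operator 𝒯 for the HK gap dynamics. -/
noncomputable def hkTRow0 : ℕ → ℝ := fun j =>
  [(47 : ℝ) / 972, 59 / 486, 5 / 27, 17 / 81, 5 / 27, 10 / 81, 5 / 81,
    5 / 243, 1 / 243].getD j 0

/-- Row 2 (index 1) of the operator 𝒯. -/
noncomputable def hkTRow1 : ℕ → ℝ := fun j =>
  [(1 : ℝ) / 54, 5 / 81, 10 / 81, 5 / 27, 17 / 81, 5 / 27, 10 / 81, 5 / 81,
    5 / 243, 1 / 243].getD j 0

/-- Row 3 (index 2) of the operator 𝒯. -/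
noncomputable def hkTRow2 : ℕ → ℝ := fun j =>
  [(1 : ℝ) / 243, 5 / 243, 5 / 81, 10 / 81, 5 / 27, 17 / 81, 5 / 27, 10 / 81,
    5 / 81, 5 / 243, 1 / 243].getD j 0

/-- The infinite matrix 𝒯: first three rows as above (zeros elsewhere), and for
i ≥ 3 (0-based) row i is the rightward shift of row i-1. -/
noncomputable def hkTMat : ℕ → ℕ → ℝ := fun i j =>
  if i = 0 then hkTRow0 j
  else if i = 1 then hkTRow1 j
  else if i ≤ j + 2 then hkTRow2 (j + 2 - i)
  else 0

/-- The action of 𝒯 on a sequence of gaps. -/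
noncomputable def hkTApply (y : ℕ → ℝ) : ℕ → ℝ := fun i => ∑ᶠ j, hkTMat i j * y j

lemma row0_big {j : ℕ} (h : 9 ≤ j) : hkTRow0 j = 0 := by
  rw [hkTRow0, List.getD_eq_default]; simpa using h
lemma row1_big {j : ℕ} (h : 10 ≤ j) : hkTRow1 j = 0 := by
  rw [hkTRow1, List.getD_eq_default]; simpa using h
lemma row2_big {j : ℕ} (h : 11 ≤ j) : hkTRow2 j = 0 := by
  rw [hkTRow2, List.getD_eq_default]; simpa using h

lemma apply0 (y : ℕ → ℝ) :
    hkTApply y 0 = ∑ j ∈ Finset.range 9, hkTRow0 j * y j := by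
  rw [hkTApply]
  simp only [hkTMat, if_pos rfl]
  apply finsum_eq_sum_of_support_subset
  intro j hj
  simp only [Function.mem_support] at hj
  simp only [Finset.coe_range, Set.mem_Iio]
  by_contra h
  exact hj (by simp [row0_big (show (9:ℕ) ≤ j by omega)])

lemma apply1 (y : ℕ → ℝ) :
    hkTApply y 1 = ∑ j ∈ Finset.range 10, hkTRow1 j * y j := by
  rw [hkTApply]
  simp only [hkTMat, if_neg one_ne_zero, if_pos rfl]
  apply finsum_eq_sum_of_support_subset
  intro j hj
  simp only [Function.mem_support] at hj
  simp only [Finset.coe_range, Set.mem_Iio]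
  by_contra h
  exact hj (by simp [row1_big (show (10:ℕ) ≤ j by omega)])

lemma apply2 (y : ℕ → ℝ) (m : ℕ) :
    hkTApply y (m + 2) = ∑ k ∈ Finset.range 11, hkTRow2 k * y (m + k) := by
  rw [hkTApply]
  have hmat : ∀ j, hkTMat (m + 2) j = if m ≤ j then hkTRow2 (j - m) else 0 := by
    intro j
    simp only [hkTMat]
    rw [if_neg (by omega), if_neg (by omega)]
    rcases le_or_gt m j with h | h
    · rw [if_pos (by omega), if_pos h]
      congr 1; omega
    · rw [if_neg (by omega), if_neg (by omega)]
  have h1 : ∑ᶠ j, hkTMat (m + 2) j * y j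
      = ∑ j ∈ Finset.Ico m (m + 11), hkTMat (m + 2) j * y j := by
    apply finsum_eq_sum_of_support_subset
    intro j hj
    simp only [Function.mem_support] at hj
    simp only [Finset.coe_Ico, Set.mem_Ico]
    rw [hmat] at hj
    constructor
    · by_contra h; rw [if_neg h, zero_mul] at hj; exact hj rfl
    · by_contra h
      push_neg at h
      rw [if_pos (by omega), row2_big (by omega), zero_mul] at hj
      exact hj rfl
  rw [h1, Finset.sum_Ico_eq_sum_range]
  simp only [Nat.add_sub_cancel_left]
  apply Finset.sum_congr rfl
  intro k _
  rw [hmat, if_pos (by omega)]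
  congr 2
  omega

lemma apply0_expand (y : ℕ → ℝ) : hkTApply y 0 =
    47/972 * y 0 + 59/486 * y 1 + 5/27 * y 2 + 17/81 * y 3 + 5/27 * y 4
      + 10/81 * y 5 + 5/81 * y 6 + 5/243 * y 7 + 1/243 * y 8 := by
  rw [apply0]
  simp [Finset.sum_range_succ, hkTRow0]

lemma apply1_expand (y : ℕ → ℝ) : hkTApply y 1 =
    1/54 * y 0 + 5/81 * y 1 + 10/81 * y 2 + 5/27 * y 3 + 17/81 * y 4
      + 5/27 * y 5 + 10/81 * y 6 + 5/81 * y 7 + 5/243 * y 8 + 1/243 * y 9 := by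
  rw [apply1]
  simp [Finset.sum_range_succ, hkTRow1]

lemma apply2_expand (y : ℕ → ℝ) (m : ℕ) : hkTApply y (m + 2) =
    1/243 * y m + 5/243 * y (m+1) + 5/81 * y (m+2) + 10/81 * y (m+3)
      + 5/27 * y (m+4) + 17/81 * y (m+5) + 5/27 * y (m+6) + 10/81 * y (m+7)
      + 5/81 * y (m+8) + 5/243 * y (m+9) + 1/243 * y (m+10) := by
  rw [apply2]
  simp [Finset.sum_range_succ, hkTRow2]

lemma hk_tailsum (z : ℕ → ℝ) (c : ℝ) (hc : 0 ≤ c)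
    (h : ∀ k, 0 ≤ 1 - z k ∧ 1 - z k < c * ((0.1117:ℝ)^(k+1) * (13/324))) :
    0 ≤ 1 - (1/243 * z 0 + 5/243 * z 1 + 5/81 * z 2 + 10/81 * z 3
      + 5/27 * z 4 + 17/81 * z 5 + 5/27 * z 6 + 10/81 * z 7
      + 5/81 * z 8 + 5/243 * z 9 + 1/243 * z 10) ∧
    1 - (1/243 * z 0 + 5/243 * z 1 + 5/81 * z 2 + 10/81 * z 3
      + 5/27 * z 4 + 17/81 * z 5 + 5/27 * z 6 + 10/81 * z 7
      + 5/81 * z 8 + 5/243 * z 9 + 1/243 * z 10) < c * ((0.1117:ℝ)^3 * (13/324)) := by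
  have g0 := h 0; have g1 := h 1; have g2 := h 2; have g3 := h 3
  have g4 := h 4; have g5 := h 5; have g6 := h 6; have g7 := h 7
  have g8 := h 8; have g9 := h 9; have g10 := h 10
  norm_num at g0 g1 g2 g3 g4 g5 g6 g7 g8 g9 g10 ⊢
  constructor
  · linarith [g0.1, g1.1, g2.1, g3.1, g4.1, g5.1, g6.1, g7.1, g8.1, g9.1, g10.1]
  · linarith [g0.2, g1.2, g2.2, g3.2, g4.2, g5.2, g6.2, g7.2, g8.2, g9.2, g10.2, hc]

lemma hk_key : ∀ τ : ℕ,
    ((13:ℝ)/324 ≤ 1 - hkTApply^[τ+1] (fun _ => 1) 0 ∧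
      1 - hkTApply^[τ+1] (fun _ => 1) 0 < (1 + 0.1117) * ((13:ℝ)/324)) ∧
    ((1:ℝ)/162 ≤ 1 - hkTApply^[τ+1] (fun _ => 1) 1 ∧
      1 - hkTApply^[τ+1] (fun _ => 1) 1 <
        0.1117 * ((13:ℝ)/324) + (1 + 0.1117) * ((1:ℝ)/162)) ∧
    (∀ m : ℕ, 0 ≤ 1 - hkTApply^[τ+1] (fun _ => 1) (m+2) ∧
      1 - hkTApply^[τ+1] (fun _ => 1) (m+2) < (0.1117:ℝ)^(m+1) * ((13:ℝ)/324)) := by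
  intro τ
  induction τ with
  | zero =>
    simp only [zero_add, Function.iterate_one]
    refine ⟨?_, ?_, ?_⟩
    · rw [apply0_expand]; norm_num
    · rw [apply1_expand]; norm_num
    · intro m
      rw [apply2_expand]
      have h : (1:ℝ) - (1/243 * 1 + 5/243 * 1 + 5/81 * 1 + 10/81 * 1 + 5/27 * 1
          + 17/81 * 1 + 5/27 * 1 + 10/81 * 1 + 5/81 * 1 + 5/243 * 1 + 1/243 * 1) = 0 := by
        norm_num
      refine ⟨by rw [h], by rw [h]; positivity⟩
  | succ τ ih =>
    obtain ⟨⟨h0l, h0u⟩, ⟨h1l, h1u⟩, hm⟩ := ih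
    set y := hkTApply^[τ+1] (fun _ => 1) with hy
    have hit : ∀ i, hkTApply^[τ+1+1] (fun _ => 1) i = hkTApply y i := by
      intro i; rw [Function.iterate_succ_apply']
    have b0 := hm 0; have b1 := hm 1; have b2 := hm 2; have b3 := hm 3
    have b4 := hm 4; have b5 := hm 5; have b6 := hm 6; have b7 := hm 7
    have b8 := hm 8; have b9 := hm 9
    norm_num at b0 b1 b2 b3 b4 b5 b6 b7 b8 b9 h0l h0u h1l h1u
    refine ⟨?_, ?_, ?_⟩
    · rw [hit, apply0_expand]
      constructor
      · norm_num; linarith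
      · norm_num; linarith
    · rw [hit, apply1_expand]
      constructor
      · norm_num; linarith
      · norm_num; linarith
    · intro m
      match m with
      | 0 =>
        rw [hit, apply2_expand]
        norm_num
        constructor
        · linarith
        · linarith
      | 1 =>
        rw [hit, apply2_expand]
        norm_num
        constructor
        · linarith
        · linarith
      | (n+2) =>
        rw [hit, apply2_expand]
        have hc : (0:ℝ) ≤ 0.1117^n := by positivity
        have h' : ∀ k, 0 ≤ 1 - y (n+2+k) ∧
            1 - y (n+2+k) < 0.1117^n * ((0.1117:ℝ)^(k+1) * (13/324)) := by
          intro k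
          have h := hm (n+k)
          rw [show n+k+1 = n+(k+1) by omega, pow_add, mul_assoc,
            show n+k+2 = n+2+k by omega] at h
          exact h
        have hpow : (0.1117:ℝ)^(n+2+1) * (13/324)
            = 0.1117^n * ((0.1117:ℝ)^3 * (13/324)) := by
          rw [show n+2+1 = n+3 from rfl, pow_add]; ring
        rw [hpow]
        exact hk_tailsum (fun k => y (n+2+k)) _ hc h'

/-- Bounds on the iterates y_τ = 𝒯^τ 𝟙, with a = 311/324, b = 161/162,
γ = 0.1117 (coordinates 0-based: y_τ(1) is coordinate 0, and for 1-based i ≥ 3,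
i.e. 0-based m ≥ 2, the bound is γ^(m-1)(1-a)).  Consequently
‖𝒯^n 𝟙 - 𝟙‖_∞ < (1+γ)(1-a) < 7/79 for all n. -/
theorem hkT_iterate_bounds :
    (∀ τ : ℕ, 1 ≤ τ →
      (1 - (311 : ℝ) / 324 ≤ 1 - hkTApply^[τ] (fun _ => 1) 0 ∧
        1 - hkTApply^[τ] (fun _ => 1) 0 <
          (1 + 0.1117) * (1 - (311 : ℝ) / 324)) ∧
      (1 - (161 : ℝ) / 162 ≤ 1 - hkTApply^[τ] (fun _ => 1) 1 ∧
        1 - hkTApply^[τ] (fun _ => 1) 1 <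
          0.1117 * (1 - (311 : ℝ) / 324) + (1 + 0.1117) * (1 - (161 : ℝ) / 162)) ∧
      (∀ m : ℕ, 2 ≤ m →
        1 - hkTApply^[τ] (fun _ => 1) m <
          (0.1117 : ℝ) ^ (m - 1) * (1 - (311 : ℝ) / 324))) ∧
    (∀ (n : ℕ) (i : ℕ),
      |hkTApply^[n] (fun _ => 1) i - 1| < (1 + 0.1117) * (1 - (311 : ℝ) / 324)) ∧
    (1 + 0.1117) * (1 - (311 : ℝ) / 324) < 7 / 79 := by
  have ha : (1 : ℝ) - 311/324 = 13/324 := by norm_num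
  have hb : (1 : ℝ) - 161/162 = 1/162 := by norm_num
  refine ⟨?_, ?_, by norm_num⟩
  · intro τ hτ
    obtain ⟨t, rfl⟩ : ∃ t, τ = t + 1 := ⟨τ - 1, by omega⟩
    obtain ⟨h0, h1, hm⟩ := hk_key t
    rw [ha, hb]
    refine ⟨h0, h1, ?_⟩
    intro m hm2
    obtain ⟨k, rfl⟩ : ∃ k, m = k + 2 := ⟨m - 2, by omega⟩
    have := (hm k).2
    rwa [show k + 2 - 1 = k + 1 from rfl]
  · intro n i
    match n with
    | 0 =>
      simp only [Function.iterate_zero, id_eq]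
      norm_num
    | (t+1) =>
      obtain ⟨⟨h0l, h0u⟩, ⟨h1l, h1u⟩, hm⟩ := hk_key t
      rw [abs_sub_comm, ha]
      match i with
      | 0 => rw [abs_of_nonneg (by linarith)]; exact h0u
      | 1 =>
        rw [abs_of_nonneg (by linarith)]
        norm_num at h1u ⊢
        linarith
      | (m+2) =>
        obtain ⟨hl, hu⟩ := hm m
        rw [abs_of_nonneg hl]
        have hp : (0.1117 : ℝ) ^ (m+1) ≤ 1 :=
          pow_le_one₀ (by norm_num) (by norm_num)
        nlinarith
end
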